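/- arXiv:2310.18186 — 3 statements merged into one kernel-verified Lean document; each statement's English description precedes it below -/
import Mathlib

section
/- Let X_1, ..., X_n be centered real random variables (not necessarily independent), each satisfying the sub-exponential tail bound P(|X_ℓ| ≥ t) ≤ 2·exp(-t²/(2σ² + 2bt)) for all t > 0. Then for any p ≥ 2, E[max_{ℓ∈[n]} |X_ℓ|^p] ≤ max{√(8σ² log n), 8b log n}^p + e·(2σ)^p·p^{p/2} + 2e·(8b)^p·p^p. -/
/-!
By the layer-cake formula, `E[Y ^ p] = p ∫₀^∞ t ^ (p - 1) P(Y ≥ t) dt` for `Y = max_ℓ |X_ℓ|`.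
Up to the threshold `M = max (√(8σ² log n)) (8 b log n)` the probability is bounded by `1`,
which contributes `M ^ p`. Beyond it, the union bound `n · 2 exp (-t² / (2σ² + 2bt))` is at most
`2 exp (-t² / (8σ²)) + 2 exp (-t / (8b))`: depending on whether `bt ≤ σ²`, the exponent is at most
`-t² / (4σ²)` or `-t / (4b)`, and `t ≥ M` lets half of it absorb the factor `n`. The two resulting
integrals are `(8σ²) ^ (p/2) · 2Γ(p/2 + 1)` and `2 (8b) ^ p Γ(p + 1)`, and `2Γ(q + 1) ≤ e q ^ q`
for `q ≥ 1` (by convexity of `Γ` on `[1, 2]`, and by comparing `x ^ q e ^ (-x)` with `e ^ (-x/2)`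
beyond).
-/

open MeasureTheory Real Set

lemma Real.Gamma_le_one_of_mem_Icc {x : ℝ} (hx : x ∈ Icc 1 2) : Gamma x ≤ 1 := by
  simpa [Gamma_one, Gamma_two] using convexOn_Gamma.le_on_segment (mem_Ioi.2 one_pos)
    (mem_Ioi.2 two_pos) (by rwa [segment_eq_Icc one_le_two])

lemma Real.two_mul_Gamma_add_one_le_of_le_two {q : ℝ} (h1 : 1 ≤ q) (h2 : q ≤ 2) :
    2 * Gamma (q + 1) ≤ exp 1 * q ^ q := by
  have hq : 0 < q := by linarith
  have hΓ : Gamma q ≤ 1 := Gamma_le_one_of_mem_Icc ⟨h1, h2⟩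
  have hqq : q ≤ q ^ q := by simpa using rpow_le_rpow_of_exponent_le h1 h1
  have he : 2 ≤ exp 1 := by linarith [exp_one_gt_d9]
  rw [Gamma_add_one hq.ne']
  nlinarith [Gamma_pos_of_pos hq]

lemma Real.exp_neg_mul_rpow_le {q x : ℝ} (hq : 0 < q) (hx : 0 ≤ x) :
    exp (-x) * x ^ q ≤ (2 * q / exp 1) ^ q * exp (-(1 / 2) * x) := by
  have hlin : x / (2 * q) ≤ exp (x / (2 * q) - 1) := by
    linarith [add_one_le_exp (x / (2 * q) - 1)]
  have hpow : (x / (2 * q)) ^ q ≤ exp (x / 2 - q) := by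
    calc (x / (2 * q)) ^ q ≤ exp (x / (2 * q) - 1) ^ q := by gcongr
      _ = exp (x / 2 - q) := by rw [← exp_mul]; congr 1; field_simp
  calc exp (-x) * x ^ q = exp (-x) * ((2 * q) ^ q * (x / (2 * q)) ^ q) := by
        rw [← mul_rpow (by positivity) (by positivity), mul_div_cancel₀ _ (by positivity)]
    _ ≤ exp (-x) * ((2 * q) ^ q * exp (x / 2 - q)) := by gcongr
    _ = (2 * q / exp 1) ^ q * exp (-(1 / 2) * x) := by
        have hexp : exp (-x) * exp (x / 2 - q) = exp (-(1 / 2) * x) / exp q := by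
          rw [← exp_add, ← exp_sub]; ring_nf
        rw [div_rpow (by positivity) (exp_pos 1).le, exp_one_rpow]
        linear_combination (2 * q) ^ q * hexp

lemma Real.Gamma_add_one_le_two_mul_rpow {q : ℝ} (hq : 0 < q) :
    Gamma (q + 1) ≤ 2 * (2 * q / exp 1) ^ q := by
  have hexp : IntegrableOn (fun x ↦ exp (-(1 / 2) * x)) (Ioi 0) :=
    integrableOn_exp_mul_Ioi (by norm_num) 0
  calc Gamma (q + 1) = ∫ x in Ioi (0 : ℝ), exp (-x) * x ^ q := by
        rw [Gamma_eq_integral (by linarith), add_sub_cancel_right]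
    _ ≤ ∫ x in Ioi (0 : ℝ), (2 * q / exp 1) ^ q * exp (-(1 / 2) * x) := by
        refine setIntegral_mono_on ?_ (hexp.const_mul _) measurableSet_Ioi
          fun x hx ↦ exp_neg_mul_rpow_le hq (le_of_lt hx)
        simpa using GammaIntegral_convergent (by linarith : 0 < q + 1)
    _ = 2 * (2 * q / exp 1) ^ q := by
        rw [integral_const_mul, integral_exp_mul_Ioi (by norm_num)]; norm_num; ring

lemma Real.two_mul_Gamma_add_one_le {q : ℝ} (hq : 1 ≤ q) : 2 * Gamma (q + 1) ≤ exp 1 * q ^ q := by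
  rcases le_total q 2 with h2 | h2
  · exact two_mul_Gamma_add_one_le_of_le_two hq h2
  have he : 2.7182818283 < exp 1 := exp_one_gt_d9
  have hbase : (2 / exp 1) ^ q ≤ (2 / exp 1) ^ (2 : ℝ) :=
    rpow_le_rpow_of_exponent_ge (by positivity) ((div_le_one (exp_pos 1)).2 (by linarith)) h2
  have hsq : 4 * (2 / exp 1) ^ (2 : ℝ) ≤ exp 1 := by
    rw [rpow_two, div_pow, ← le_div_iff₀' (by norm_num), div_le_iff₀ (by positivity)]
    nlinarith
  calc 2 * Gamma (q + 1) ≤ 2 * (2 * (2 * q / exp 1) ^ q) :=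
        mul_le_mul_of_nonneg_left (Gamma_add_one_le_two_mul_rpow (by linarith)) zero_le_two
    _ = 4 * (2 / exp 1) ^ q * q ^ q := by
        rw [mul_div_right_comm, mul_rpow (by positivity) (by linarith)]; ring
    _ ≤ exp 1 * q ^ q := by gcongr; linarith

lemma Real.mul_integral_rpow_sub_one_mul_exp_neg_mul_rpow {p r a : ℝ} (hp : 0 < p) (hr : 0 < r)
    (ha : 0 < a) :
    p * ∫ t in Ioi (0 : ℝ), t ^ (p - 1) * exp (-a * t ^ r) =
      a ^ (-(p / r)) * Gamma (p / r + 1) := by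
  rw [integral_rpow_mul_exp_neg_mul_rpow hr (by linarith) ha, sub_add_cancel,
    Gamma_add_one (by positivity), neg_div]
  field_simp

lemma Real.mul_integral_rpow_sub_one_mul_exp_neg_inv_mul_rpow_le {p r c : ℝ} (hr : 0 < r)
    (hrp : r ≤ p) (hc : 0 < c) :
    p * ∫ t in Ioi (0 : ℝ), t ^ (p - 1) * exp (-c⁻¹ * t ^ r) ≤
      exp 1 / 2 * (c * p / r) ^ (p / r) := by
  have hq : 1 ≤ p / r := (one_le_div hr).2 hrp
  rw [mul_integral_rpow_sub_one_mul_exp_neg_mul_rpow (hr.trans_le hrp) hr (inv_pos.2 hc),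
    inv_rpow hc.le, rpow_neg hc.le, inv_inv, mul_div_assoc,
    mul_rpow hc.le (by positivity)]
  have := two_mul_Gamma_add_one_le hq
  have : 0 ≤ c ^ (p / r) := by positivity
  nlinarith

lemma MeasureTheory.lintegral_rpow_le_add_lintegral_meas_le_mul {Ω : Type*} [MeasurableSpace Ω]
    (μ : Measure Ω) [IsProbabilityMeasure μ] {η : Ω → ℝ} (hη : 0 ≤ᵐ[μ] η)
    (hη_meas : AEMeasurable η μ) {p M : ℝ} (hp : 0 < p) (hM : 0 ≤ M) :
    ∫⁻ ω, ENNReal.ofReal (η ω ^ p) ∂μ ≤ ENNReal.ofReal (M ^ p) +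
      ENNReal.ofReal p * ∫⁻ t in Ioi M, μ {ω | t ≤ η ω} * ENNReal.ofReal (t ^ (p - 1)) := by
  have hbody : ENNReal.ofReal p * ∫⁻ t in Ioc 0 M, μ {ω | t ≤ η ω} * ENNReal.ofReal (t ^ (p - 1))
      ≤ ENNReal.ofReal (M ^ p) := by
    calc ENNReal.ofReal p * ∫⁻ t in Ioc 0 M, μ {ω | t ≤ η ω} * ENNReal.ofReal (t ^ (p - 1))
        ≤ ENNReal.ofReal p * ∫⁻ t in Ioc 0 M, ENNReal.ofReal (t ^ (p - 1)) := by
          gcongr with t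
          exact mul_le_of_le_one_left' prob_le_one
      _ = ENNReal.ofReal (M ^ p) := by
          rw [← ofReal_integral_eq_lintegral_ofReal, ← ENNReal.ofReal_mul hp.le,
            ← intervalIntegral.integral_of_le hM, integral_rpow (by left; linarith), sub_add_cancel,
            zero_rpow hp.ne', sub_zero, mul_div_cancel₀ _ hp.ne']
          · exact (intervalIntegrable_iff_integrableOn_Ioc_of_le hM).1
              (intervalIntegral.intervalIntegrable_rpow' (by linarith))
          · filter_upwards [ae_restrict_mem measurableSet_Ioc] with t ht
            exact rpow_nonneg ht.1.le _
  rw [lintegral_rpow_eq_lintegral_meas_le_mul μ hη hη_meas hp, ← Ioc_union_Ioi_eq_Ioi hM,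
    lintegral_union measurableSet_Ioi Ioc_disjoint_Ioi_same, mul_add]
  gcongr

lemma MeasureTheory.integral_rpow_le_of_measureReal_le {Ω : Type*} [MeasurableSpace Ω]
    (μ : Measure Ω) [IsProbabilityMeasure μ] {η : Ω → ℝ} (hη : ∀ ω, 0 ≤ η ω)
    (hη_meas : AEMeasurable η μ) {p M : ℝ} (hp : 0 < p) (hM : 0 ≤ M) {g : ℝ → ℝ}
    (hg : ∀ t, 0 < t → 0 ≤ g t) (hg_int : IntegrableOn (fun t ↦ t ^ (p - 1) * g t) (Ioi 0))
    (htail : ∀ t, M < t → μ.real {ω | t ≤ η ω} ≤ g t) :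
    ∫ ω, η ω ^ p ∂μ ≤ M ^ p + p * ∫ t in Ioi 0, t ^ (p - 1) * g t := by
  have hint_nonneg : 0 ≤ ∫ t in Ioi 0, t ^ (p - 1) * g t :=
    setIntegral_nonneg measurableSet_Ioi fun t ht ↦
      mul_nonneg (rpow_nonneg (le_of_lt ht) _) (hg t ht)
  have htail_int : ∫⁻ t in Ioi M, μ {ω | t ≤ η ω} * ENNReal.ofReal (t ^ (p - 1)) ≤
      ENNReal.ofReal (∫ t in Ioi 0, t ^ (p - 1) * g t) := by
    rw [ofReal_integral_eq_lintegral_ofReal hg_int]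
    · refine (setLIntegral_mono' measurableSet_Ioi fun t ht ↦ ?_).trans
        (lintegral_mono_set (Ioi_subset_Ioi hM))
      have ht0 : 0 < t := hM.trans_lt ht
      rw [mul_comm, ENNReal.ofReal_mul (rpow_nonneg ht0.le _), ← ofReal_measureReal]
      gcongr
      exact htail t ht
    · filter_upwards [ae_restrict_mem measurableSet_Ioi] with t ht
      exact mul_nonneg (rpow_nonneg (le_of_lt ht) _) (hg t ht)
  rw [integral_eq_lintegral_of_nonneg_ae (ae_of_all _ fun ω ↦ rpow_nonneg (hη ω) p)
    (hη_meas.pow_const p).aestronglyMeasurable]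
  refine ENNReal.toReal_le_of_le_ofReal (by positivity) ?_
  calc ∫⁻ ω, ENNReal.ofReal (η ω ^ p) ∂μ
      ≤ ENNReal.ofReal (M ^ p) +
          ENNReal.ofReal p * ∫⁻ t in Ioi M, μ {ω | t ≤ η ω} * ENNReal.ofReal (t ^ (p - 1)) :=
        lintegral_rpow_le_add_lintegral_meas_le_mul μ (ae_of_all _ hη) hη_meas hp hM
    _ ≤ ENNReal.ofReal (M ^ p) +
          ENNReal.ofReal p * ENNReal.ofReal (∫ t in Ioi 0, t ^ (p - 1) * g t) := by
        gcongr
    _ = ENNReal.ofReal (M ^ p + p * ∫ t in Ioi 0, t ^ (p - 1) * g t) := by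
        rw [← ENNReal.ofReal_mul hp.le, ← ENNReal.ofReal_add (by positivity) (by positivity)]

lemma iSup_rpow_of_nonneg {ι : Type*} [Finite ι] [Nonempty ι] {f : ι → ℝ} (hf : ∀ i, 0 ≤ f i)
    {p : ℝ} (hp : 0 ≤ p) : ⨆ i, f i ^ p = (⨆ i, f i) ^ p := by
  obtain ⟨i, hi⟩ := exists_eq_ciSup_of_finite (f := f)
  refine le_antisymm (ciSup_le fun j ↦ ?_) ?_
  · exact rpow_le_rpow (hf j) (le_ciSup (Finite.bddAbove_range f) j) hp
  · rw [← hi]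
    exact le_ciSup (f := fun j ↦ f j ^ p) (Finite.bddAbove_range _) i

lemma measureReal_le_ciSup_le_sum {Ω ι : Type*} [MeasurableSpace Ω] (μ : Measure Ω)
    [IsFiniteMeasure μ] [Fintype ι] [Nonempty ι] (Y : ι → Ω → ℝ) (t : ℝ) :
    μ.real {ω | t ≤ ⨆ i, Y i ω} ≤ ∑ i, μ.real {ω | t ≤ Y i ω} := by
  refine le_trans (measureReal_mono fun ω hω ↦ ?_) (measureReal_iUnion_fintype_le _)
  obtain ⟨i, hi⟩ := exists_eq_ciSup_of_finite (f := fun i ↦ Y i ω)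
  exact mem_iUnion.2 ⟨i, hω.trans_eq hi.symm⟩

lemma Real.exp_neg_sq_div_le_add {σ b t : ℝ} (hσ : 0 < σ) (hb : 0 < b) (ht : 0 < t) :
    exp (-(t ^ 2) / (2 * σ ^ 2 + 2 * b * t)) ≤
      exp (-(t ^ 2 / (4 * σ ^ 2))) + exp (-(t / (4 * b))) := by
  rcases le_total (b * t) (σ ^ 2) with h | h
  · have : exp (-(t ^ 2) / (2 * σ ^ 2 + 2 * b * t)) ≤ exp (-(t ^ 2 / (4 * σ ^ 2))) := by
      rw [exp_le_exp, neg_div, neg_le_neg_iff]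
      exact div_le_div_of_nonneg_left (by positivity) (by positivity) (by linarith)
    linarith [exp_pos (-(t / (4 * b)))]
  · have : exp (-(t ^ 2) / (2 * σ ^ 2 + 2 * b * t)) ≤ exp (-(t / (4 * b))) := by
      rw [exp_le_exp, neg_div, neg_le_neg_iff, show t / (4 * b) = t ^ 2 / (4 * (b * t)) by
        field_simp]
      exact div_le_div_of_nonneg_left (by positivity) (by positivity) (by linarith)
    linarith [exp_pos (-(t ^ 2 / (4 * σ ^ 2)))]

lemma Real.mul_exp_neg_two_mul_le {y x : ℝ} (h : log y ≤ x) : y * exp (-(2 * x)) ≤ exp (-x) :=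
  calc y * exp (-(2 * x)) ≤ exp x * exp (-(2 * x)) :=
        mul_le_mul_of_nonneg_right ((le_exp_log y).trans (exp_le_exp.2 h)) (exp_pos _).le
    _ = exp (-x) := by rw [← exp_add]; ring_nf

noncomputable def subexponentialMaxTail (σ b t : ℝ) : ℝ :=
  2 * exp (-(t ^ 2 / (8 * σ ^ 2))) + 2 * exp (-(t / (8 * b)))

lemma natCast_mul_subexponential_tail_le {σ b t : ℝ} (hσ : 0 < σ) (hb : 0 < b) (ht : 0 < t)
    {n : ℕ} (hσt : sqrt (8 * σ ^ 2 * log n) ≤ t) (hbt : 8 * b * log n ≤ t) :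
    n * (2 * exp (-(t ^ 2) / (2 * σ ^ 2 + 2 * b * t))) ≤ subexponentialMaxTail σ b t := by
  have hσn : log n ≤ t ^ 2 / (8 * σ ^ 2) := by
    rw [le_div_iff₀ (by positivity), mul_comm]
    exact (sqrt_le_left (by positivity)).1 hσt
  have hbn : log n ≤ t / (8 * b) := by
    rw [le_div_iff₀ (by positivity), mul_comm]
    exact hbt
  have hgauss := mul_exp_neg_two_mul_le hσn
  have hexpo := mul_exp_neg_two_mul_le hbn
  rw [show 2 * (t ^ 2 / (8 * σ ^ 2)) = t ^ 2 / (4 * σ ^ 2) by ring] at hgauss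
  rw [show 2 * (t / (8 * b)) = t / (4 * b) by ring] at hexpo
  calc n * (2 * exp (-(t ^ 2) / (2 * σ ^ 2 + 2 * b * t)))
      ≤ n * (2 * (exp (-(t ^ 2 / (4 * σ ^ 2))) + exp (-(t / (4 * b))))) := by
        gcongr; exact exp_neg_sq_div_le_add hσ hb ht
    _ = 2 * (n * exp (-(t ^ 2 / (4 * σ ^ 2)))) + 2 * (n * exp (-(t / (4 * b)))) := by ring
    _ ≤ subexponentialMaxTail σ b t := by unfold subexponentialMaxTail; gcongr

lemma rpow_mul_subexponentialMaxTail (σ b p t : ℝ) :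
    t ^ (p - 1) * subexponentialMaxTail σ b t =
      2 * (t ^ (p - 1) * exp (-(8 * σ ^ 2)⁻¹ * t ^ (2 : ℝ))) +
        2 * (t ^ (p - 1) * exp (-(8 * b)⁻¹ * t ^ (1 : ℝ))) := by
  simp only [subexponentialMaxTail, rpow_two, rpow_one, neg_mul, inv_mul_eq_div]
  ring

lemma integrableOn_rpow_mul_subexponentialMaxTail {σ b p : ℝ} (hσ : 0 < σ) (hb : 0 < b)
    (hp : 0 < p) : IntegrableOn (fun t ↦ t ^ (p - 1) * subexponentialMaxTail σ b t) (Ioi 0) := by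
  simp_rw [rpow_mul_subexponentialMaxTail]
  exact
    ((integrableOn_rpow_mul_exp_neg_mul_rpow (by linarith) two_pos (by positivity)).const_mul 2).add
      ((integrableOn_rpow_mul_exp_neg_mul_rpow (by linarith) one_pos (by positivity)).const_mul 2)

lemma mul_integral_rpow_mul_subexponentialMaxTail_le {σ b p : ℝ} (hσ : 0 < σ) (hb : 0 < b)
    (hp : 2 ≤ p) :
    p * ∫ t in Ioi 0, t ^ (p - 1) * subexponentialMaxTail σ b t ≤
      exp 1 * (2 * σ) ^ p * p ^ (p / 2) + 2 * exp 1 * (8 * b) ^ p * p ^ p := by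
  have hgauss := mul_integral_rpow_sub_one_mul_exp_neg_inv_mul_rpow_le two_pos hp
    (by positivity : 0 < 8 * σ ^ 2)
  have hexpo := mul_integral_rpow_sub_one_mul_exp_neg_inv_mul_rpow_le one_pos (by linarith : 1 ≤ p)
    (by positivity : 0 < 8 * b)
  have hσp : (8 * σ ^ 2 * p / 2) ^ (p / 2) = (2 * σ) ^ p * p ^ (p / 2) := by
    rw [show 8 * σ ^ 2 * p / 2 = (2 * σ) ^ (2 : ℝ) * p by rw [rpow_two]; ring,
      mul_rpow (by positivity) (by positivity), ← rpow_mul (by positivity),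
      mul_div_cancel₀ _ two_ne_zero]
  have hbp : (8 * b * p / 1) ^ (p / 1) = (8 * b) ^ p * p ^ p := by
    rw [div_one, div_one, mul_rpow (by positivity) (by positivity)]
  have hgauss_int := integrableOn_rpow_mul_exp_neg_mul_rpow (s := p - 1) (by linarith) two_pos
    (by positivity : 0 < (8 * σ ^ 2)⁻¹)
  have hexpo_int := integrableOn_rpow_mul_exp_neg_mul_rpow (s := p - 1) (by linarith) one_pos
    (by positivity : 0 < (8 * b)⁻¹)
  simp_rw [rpow_mul_subexponentialMaxTail]
  rw [integral_add (hgauss_int.const_mul 2) (hexpo_int.const_mul 2), integral_const_mul,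
    integral_const_mul]
  rw [hσp] at hgauss
  rw [hbp] at hexpo
  have : 0 ≤ exp 1 * (8 * b) ^ p * p ^ p := by positivity
  nlinarith

theorem max_subexponential_moment_bound_general
    {Ω : Type*} [MeasurableSpace Ω] (P : Measure Ω) [IsProbabilityMeasure P]
    (n : ℕ) (hn : 0 < n) (X : Fin n → Ω → ℝ) (hmeas : ∀ ℓ, Measurable (X ℓ))
    (σ b : ℝ) (hσ : 0 < σ) (hb : 0 < b)
    (htail : ∀ ℓ, ∀ t : ℝ, 0 < t →
      (P {ω | t ≤ |X ℓ ω|}).toReal ≤ 2 * Real.exp (-(t ^ 2) / (2 * σ ^ 2 + 2 * b * t)))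
    (p : ℝ) (hp : 2 ≤ p) :
    (∫ ω, ⨆ ℓ : Fin n, |X ℓ ω| ^ p ∂P) ≤
      (max (Real.sqrt (8 * σ ^ 2 * Real.log n)) (8 * b * Real.log n)) ^ p +
        Real.exp 1 * (2 * σ) ^ p * p ^ (p / 2) + 2 * Real.exp 1 * (8 * b) ^ p * p ^ p := by
  have : Nonempty (Fin n) := Fin.pos_iff_nonempty.mp hn
  have hp0 : 0 < p := by linarith
  set M := max (sqrt (8 * σ ^ 2 * log n)) (8 * b * log n)
  have hM : 0 ≤ M := (sqrt_nonneg _).trans (le_max_left _ _)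
  have hmax_tail : ∀ t, M < t → P.real {ω | t ≤ ⨆ ℓ, |X ℓ ω|} ≤ subexponentialMaxTail σ b t := by
    intro t ht
    have ht0 : 0 < t := hM.trans_lt ht
    calc P.real {ω | t ≤ ⨆ ℓ, |X ℓ ω|} ≤ ∑ ℓ, P.real {ω | t ≤ |X ℓ ω|} :=
          measureReal_le_ciSup_le_sum P _ t
      _ ≤ ∑ _ℓ : Fin n, 2 * exp (-(t ^ 2) / (2 * σ ^ 2 + 2 * b * t)) :=
          Finset.sum_le_sum fun ℓ _ ↦ htail ℓ t ht0
      _ = n * (2 * exp (-(t ^ 2) / (2 * σ ^ 2 + 2 * b * t))) := by simp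
      _ ≤ subexponentialMaxTail σ b t :=
          natCast_mul_subexponential_tail_le hσ hb ht0 (le_of_max_le_left ht.le)
            (le_of_max_le_right ht.le)
  simp_rw [iSup_rpow_of_nonneg (fun ℓ ↦ abs_nonneg (X ℓ _)) hp0.le]
  calc _ ≤ M ^ p + p * ∫ t in Ioi 0, t ^ (p - 1) * subexponentialMaxTail σ b t :=
        integral_rpow_le_of_measureReal_le P (fun ω ↦ Real.iSup_nonneg fun ℓ ↦ abs_nonneg _)
          (Measurable.iSup fun ℓ ↦ (hmeas ℓ).abs).aemeasurable hp0 hM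
          (fun t _ ↦ by unfold subexponentialMaxTail; positivity)
          (integrableOn_rpow_mul_subexponentialMaxTail hσ hb hp0) hmax_tail
    _ ≤ _ := by
        rw [add_assoc]
        gcongr
        exact mul_integral_rpow_mul_subexponentialMaxTail_le hσ hb hp

/-- Maximal moment bound for (σ², b)-sub-exponential random variables: if
`X_1, …, X_n` are centered, each satisfying
`P(|X_ℓ| ≥ t) ≤ 2·exp(-t²/(2σ² + 2bt))` for all `t > 0`, then for any `p ≥ 2`,
`E[max_ℓ |X_ℓ|^p] ≤ max{√(8σ² log n), 8b log n}^p + e·(2σ)^p·p^{p/2} + 2e·(8b)^p·p^p`. -/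
theorem max_subexponential_moment_bound
    {Ω : Type*} [MeasurableSpace Ω] (P : Measure Ω) [IsProbabilityMeasure P]
    (n : ℕ) (hn : 0 < n) (X : Fin n → Ω → ℝ) (hmeas : ∀ ℓ, Measurable (X ℓ))
    (σ b : ℝ) (hσ : 0 < σ) (hb : 0 < b)
    (hcentered : ∀ ℓ, ∫ ω, X ℓ ω ∂P = 0)
    (htail : ∀ ℓ, ∀ t : ℝ, 0 < t →
      (P {ω | t ≤ |X ℓ ω|}).toReal ≤ 2 * Real.exp (-(t ^ 2) / (2 * σ ^ 2 + 2 * b * t)))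
    (p : ℝ) (hp : 2 ≤ p) :
    (∫ ω, ⨆ ℓ : Fin n, |X ℓ ω| ^ p ∂P) ≤
      (max (Real.sqrt (8 * σ ^ 2 * Real.log n)) (8 * b * Real.log n)) ^ p +
        Real.exp 1 * (2 * σ) ^ p * p ^ (p / 2) + 2 * Real.exp 1 * (8 * b) ^ p * p ^ p :=
  max_subexponential_moment_bound_general P n hn X hmeas σ b hσ hb htail p hp
end

section
/- Consider an episodic MDP of horizon H with rewards r_h that are L_r-Lipschitz on S × A, and transition kernels reparametrized by functions F_h(·, ξ_h) that are L_F-Lipschitz for almost all ξ_h. Then the optimal Q-functions Q*_h and value functions V*_h (defined by the optimal Bellman equations with Q*_{H+1} = V*_{H+1} = 0) are Lipschitz continuous with constant L_{V,h} ≤ Σ_{h'=h}^{H} L_F^{h'-h} · L_r, where V*_h is Lipschitz with respect to ρ_S and Q*_h with respect to the product metric ρ satisfying ρ((s,a),(s',a')) ≤ ρ_S(s,s') + ρ_A(a,a'). -/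
/-!
Backward induction on the stage `h`. If `V*_{h+1}` is `K`-Lipschitz, then for almost every
noise `ξ` the map `x ↦ V*_{h+1}(F_h(x, ξ))` is `K L_F`-Lipschitz, and averaging over `ξ`
preserves this; adding the reward gives `Q*_h` the constant `L_r + K L_F`. Maximising over
actions does not increase a Lipschitz constant, so `V*_h` inherits it. Starting from
`V*_{H+1} = 0`, the constants produced by `K ↦ L_r + K L_F` are exactly the partial
geometric sums `Σ_{h'=h}^H L_F^{h'-h} L_r`.
-/

open MeasureTheory Set

open scoped NNReal

section Integral

variable {Ξ E : Type*} [MeasurableSpace Ξ] {μ : Measure Ξ} [NormedAddCommGroup E]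

theorem MeasureTheory.Integrable.of_ae_dist_le [IsFiniteMeasure μ] {u v : Ξ → E} {C : ℝ}
    (hu : Integrable u μ) (hv : AEStronglyMeasurable v μ) (huv : ∀ᵐ ξ ∂μ, dist (u ξ) (v ξ) ≤ C) :
    Integrable v μ := by
  have hsub : Integrable (u - v) μ := .of_bound (hu.aestronglyMeasurable.sub hv) C <| by
    simpa only [Pi.sub_apply, dist_eq_norm] using huv
  simpa using hu.sub hsub

variable [NormedSpace ℝ E]

-- Without integrability both integrals are junk `0`, and `0 ≤ C` holds because `μ ≠ 0`.
theorem dist_integral_le_of_ae_dist_le [IsProbabilityMeasure μ] {u v : Ξ → E} {C : ℝ}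
    (hu : AEStronglyMeasurable u μ) (hv : AEStronglyMeasurable v μ)
    (huv : ∀ᵐ ξ ∂μ, dist (u ξ) (v ξ) ≤ C) :
    dist (∫ ξ, u ξ ∂μ) (∫ ξ, v ξ ∂μ) ≤ C := by
  by_cases hu_int : Integrable u μ
  · have hv_int : Integrable v μ := hu_int.of_ae_dist_le hv huv
    rw [dist_eq_norm, ← integral_sub hu_int hv_int]
    have := norm_integral_le_of_norm_le_const (f := fun ξ => u ξ - v ξ)
      (by simpa only [dist_eq_norm] using huv)
    rwa [probReal_univ, mul_one] at this
  · have hv_int : ¬Integrable v μ := fun hv_int =>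
      hu_int (hv_int.of_ae_dist_le hu (by simpa only [dist_comm] using huv))
    obtain ⟨ξ, hξ⟩ := huv.exists
    rw [integral_undef hu_int, integral_undef hv_int, dist_self]
    exact dist_nonneg.trans hξ

theorem LipschitzWith.integral_of_ae {X : Type*} [PseudoMetricSpace X] [IsProbabilityMeasure μ]
    {K : ℝ≥0} {f : X → Ξ → E} (hmeas : ∀ x, AEStronglyMeasurable (f x) μ)
    (hlip : ∀ᵐ ξ ∂μ, LipschitzWith K fun x => f x ξ) :
    LipschitzWith K fun x => ∫ ξ, f x ξ ∂μ :=
  .of_dist_le_mul fun x y =>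
    dist_integral_le_of_ae_dist_le (hmeas x) (hmeas y)
      (hlip.mono fun _ hξ => hξ.dist_le_mul x y)

end Integral

theorem LipschitzWith.ciSup {X ι : Type*} [PseudoMetricSpace X] [Nonempty ι] {K : ℝ≥0}
    {f : ι → X → ℝ} (hf : ∀ i, LipschitzWith K (f i))
    (hbdd : ∀ x, BddAbove (range fun i => f i x)) :
    LipschitzWith K fun x => ⨆ i, f i x :=
  .of_le_add_mul K fun x y => ciSup_le fun i =>
    ((hf i).le_add_mul x y).trans (by gcongr; exact le_ciSup (hbdd y) i)

theorem lipschitzWith_bellman_backup {X S Ξ : Type*} [PseudoMetricSpace X] [PseudoMetricSpace S]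
    [MeasurableSpace S] [OpensMeasurableSpace S] [MeasurableSpace Ξ] {μ : Measure Ξ}
    [IsProbabilityMeasure μ] {F : X → Ξ → S} {L_F L_r K : ℝ≥0} {r : X → ℝ} {V : S → ℝ}
    (hFmeas : ∀ x, Measurable (F x)) (hFLip : ∀ᵐ ξ ∂μ, LipschitzWith L_F fun x => F x ξ)
    (hr : LipschitzWith L_r r) (hV : LipschitzWith K V) :
    LipschitzWith (L_r + K * L_F) fun x => r x + ∫ ξ, V (F x ξ) ∂μ :=
  hr.add <| .integral_of_ae
    (fun x => (hV.continuous.measurable.comp (hFmeas x)).aestronglyMeasurable)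
    (hFLip.mono fun _ hξ => hV.comp hξ)

-- The paper's `L_{V,h}`.
def optimalValueLipschitzConst (L_F L_r : ℝ≥0) (H h : ℕ) : ℝ≥0 :=
  ∑ h' ∈ Finset.Icc h H, L_F ^ (h' - h) * L_r

namespace optimalValueLipschitzConst

variable (L_F L_r : ℝ≥0) {H h : ℕ}

theorem eq_add_succ_mul (hh : h ≤ H) :
    optimalValueLipschitzConst L_F L_r H h
      = L_r + optimalValueLipschitzConst L_F L_r H (h + 1) * L_F := by
  rw [optimalValueLipschitzConst, ← Finset.Ioc_insert_left hh, Finset.sum_insert (by simp),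
    ← Finset.Icc_add_one_left_eq_Ioc, optimalValueLipschitzConst, Finset.sum_mul]
  refine congrArg₂ _ (by simp) (Finset.sum_congr rfl fun h' hh' => ?_)
  rw [show h' - h = h' - (h + 1) + 1 by grind, pow_succ]
  ring

theorem coe_eq (H h : ℕ) :
    (optimalValueLipschitzConst L_F L_r H h : ℝ)
      = ∑ h' ∈ Finset.Icc h H, (L_F : ℝ) ^ (h' - h) * L_r := by
  simp [optimalValueLipschitzConst]

end optimalValueLipschitzConst

/-- In an episodic MDP of horizon `H` whose rewards are `L_r`-Lipschitz and whose
transitions are reparametrized by functions `F_h(·, ξ)` that are `L_F`-Lipschitz for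
almost every noise `ξ`, the optimal Q- and value functions (given by the optimal
Bellman equations with zero terminal value) are Lipschitz with constant
`L_{V,h} ≤ Σ_{h'=h}^H L_F^{h'-h}·L_r`. -/
theorem optimal_values_lipschitz_of_reparametrization
    {S A : Type*} [MetricSpace S] [MetricSpace A] [Nonempty A]
    [MeasurableSpace S] [BorelSpace S]
    {Ξ : Type*} [MeasurableSpace Ξ]
    (H : ℕ) (μ : ℕ → Measure Ξ) (hμ : ∀ h, IsProbabilityMeasure (μ h))
    (F : ℕ → (S × A) → Ξ → S) (hFmeas : ∀ h x, Measurable (F h x))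
    (L_F L_r : NNReal)
    (hFLip : ∀ h, ∀ᵐ ξ ∂(μ h), LipschitzWith L_F (fun x : S × A => F h x ξ))
    (r : ℕ → S × A → ℝ) (hr : ∀ h, LipschitzWith L_r (r h))
    (Q : ℕ → S × A → ℝ) (V : ℕ → S → ℝ)
    (hterm : ∀ s, V (H + 1) s = 0)
    (hQ : ∀ h, 1 ≤ h → h ≤ H → ∀ x : S × A,
      Q h x = r h x + ∫ ξ, V (h + 1) (F h x ξ) ∂(μ h))
    (hV : ∀ h, 1 ≤ h → h ≤ H → ∀ s : S, V h s = ⨆ a : A, Q h (s, a))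
    (hVbdd : ∀ h s, BddAbove (Set.range fun a : A => Q h (s, a))) :
    ∀ h, 1 ≤ h → h ≤ H →
      (∀ x y : S × A,
        |Q h x - Q h y| ≤ (∑ h' ∈ Finset.Icc h H, (L_F : ℝ) ^ (h' - h) * L_r) * dist x y) ∧
      (∀ s s' : S,
        |V h s - V h s'| ≤ (∑ h' ∈ Finset.Icc h H, (L_F : ℝ) ^ (h' - h) * L_r) * dist s s') := by
  let L := optimalValueLipschitzConst L_F L_r H
  have hQ_lip : ∀ h, 1 ≤ h → h ≤ H → LipschitzWith (L (h + 1)) (V (h + 1)) →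
      LipschitzWith (L h) (Q h) := fun h h1 hH hV_succ => by
    have := hμ h
    have hL : L h = L_r + L (h + 1) * L_F := optimalValueLipschitzConst.eq_add_succ_mul _ _ hH
    rw [funext (hQ h h1 hH), hL]
    exact lipschitzWith_bellman_backup (hFmeas h) (hFLip h) (hr h) hV_succ
  have hV_lip : ∀ h, 1 ≤ h → h ≤ H + 1 → LipschitzWith (L h) (V h) := fun h h1 hH => by
    refine Nat.decreasingInduction' (P := fun k => LipschitzWith (L k) (V k))
      (fun k hk hhk ih => ?_) hH ?_
    · rw [funext (hV k (h1.trans hhk) (by omega))]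
      exact .ciSup (fun a => ((hQ_lip k (h1.trans hhk) (by omega) ih).comp
        (LipschitzWith.prodMk_right a)).weaken (by simp)) (hVbdd k)
    · rw [funext hterm]
      exact LipschitzWith.const' 0
  intro h h1 hH
  refine ⟨fun x y => ?_, fun s s' => ?_⟩
  · simpa [← Real.dist_eq, L, optimalValueLipschitzConst.coe_eq] using
      (hQ_lip h h1 hH (hV_lip (h + 1) (by omega) (by omega))).dist_le_mul x y
  · simpa [← Real.dist_eq, L, optimalValueLipschitzConst.coe_eq] using
      (hV_lip h h1 (by omega)).dist_le_mul s s'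
end

section
/- Let B be a ball in an adaptive partition with splitting rule: a ball B is split when √(d_max²/n(B)) ≤ diam(B), where n(B) counts visits to B and its parents. Then for any active ball B, the visit count satisfies (d_max/(2·diam(B)))² ≤ n(B) ≤ (d_max/diam(B))², assuming diam(child) = diam(parent)/2 in the hierarchical partition. -/
lemma sqrt_div_le_iff_div_sq_le {a d n : ℝ} (hd : 0 < d) (hn : 0 < n) :
    √(a / n) ≤ d ↔ a / d ^ 2 ≤ n := by
  rw [Real.sqrt_le_left hd.le, div_le_iff₀ hn, div_le_iff₀ (by positivity), mul_comm]

lemma le_sqrt_div_iff_le_div_sq {a d n : ℝ} (hd : 0 < d) (hn : 0 < n) :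
    d ≤ √(a / n) ↔ n ≤ a / d ^ 2 := by
  rw [Real.le_sqrt' hd, le_div_iff₀ hn, le_div_iff₀ (by positivity), mul_comm]

theorem adaptive_partition_count_bounds_general
    (dmax diamB : ℝ) (nB nParent : ℕ)
    (hdiam : 0 < diamB) (hnP : 0 < nParent)
    -- the parent ball, of diameter `2 · diamB`, satisfied the splitting rule:
    (hParentSplit : Real.sqrt (dmax ^ 2 / nParent) ≤ 2 * diamB)
    -- the count of `B` includes the visits of its parents:
    (hMono : nParent ≤ nB)
    -- `B` is active, i.e. the splitting rule has not been triggered for `B`: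
    (hActive : diamB ≤ Real.sqrt (dmax ^ 2 / nB)) :
    (dmax / (2 * diamB)) ^ 2 ≤ (nB : ℝ) ∧ (nB : ℝ) ≤ (dmax / diamB) ^ 2 := by
  have hnP' : (0 : ℝ) < nParent := by exact_mod_cast hnP
  have hnB : (0 : ℝ) < nB := by exact_mod_cast hnP.trans_le hMono
  rw [div_pow, div_pow]
  constructor
  · calc dmax ^ 2 / (2 * diamB) ^ 2
        ≤ nParent := (sqrt_div_le_iff_div_sq_le (by positivity) hnP').mp hParentSplit
      _ ≤ nB := by exact_mod_cast hMono
  · exact (le_sqrt_div_iff_le_div_sq hdiam hnB).mp hActive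

/-- For an active ball `B` of an adaptive partition with splitting rule
"split `B` when `√(d_max²/n(B)) ≤ diam(B)`", where the parent ball (of diameter
`2·diam(B)`) was split before `B` became active and counts are monotone, the visit
count satisfies `(d_max/(2·diam B))² ≤ n(B) ≤ (d_max/diam B)²`. -/
theorem adaptive_partition_count_bounds
    (dmax diamB : ℝ) (nB nParent : ℕ)
    (hdmax : 0 < dmax) (hdiam : 0 < diamB) (hnP : 0 < nParent)
    -- the parent ball, of diameter `2 · diamB`, satisfied the splitting rule:
    (hParentSplit : Real.sqrt (dmax ^ 2 / nParent) ≤ 2 * diamB)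
    -- the count of `B` includes the visits of its parents:
    (hMono : nParent ≤ nB)
    -- `B` is active, i.e. the splitting rule has not been triggered for `B`:
    (hActive : diamB ≤ Real.sqrt (dmax ^ 2 / nB)) :
    (dmax / (2 * diamB)) ^ 2 ≤ (nB : ℝ) ∧ (nB : ℝ) ≤ (dmax / diamB) ^ 2 :=
  adaptive_partition_count_bounds_general dmax diamB nB nParent hdiam hnP hParentSplit hMono hActive
end
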